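/- Let x ∈ ℂⁿ be s-sparse with T = supp(x), let A ∈ ℂ^{m×n} and X ∈ ℂ^{n×n} with ‖(P_T X A*A P_T)⁻¹‖_∞ ≤ 2 (the inverse taken on the range of P_T) and max_{i ∈ T^c} ‖P_T X A*A e_i‖₂ ≤ 1. Then every h ∈ ℂⁿ with A h = 0 satisfies ‖h_T‖₂ ≤ 2‖h_{T^c}‖₁. -/

import Mathlib

open MeasureTheory Matrix Finset ComplexConjugate
open scoped BigOperators Matrix ComplexOrder

noncomputable section

/-- The ℓ₂ (Euclidean) norm of a vector in ℂⁿ. -/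
def l2norm {n : ℕ} (v : Fin n → ℂ) : ℝ := Real.sqrt (∑ i, ‖v i‖ ^ 2)

/-- The ℓ₁ norm of a vector in ℂⁿ. -/
def l1norm {n : ℕ} (v : Fin n → ℂ) : ℝ := ∑ i, ‖v i‖

/-- The ℓ∞ norm (maximal absolute entry) of a vector in ℂⁿ. -/
def linfNorm {n : ℕ} (v : Fin n → ℂ) : ℝ := ⨆ i, ‖v i‖

/-- The sparsity ‖v‖₀ of a vector: the cardinality of its support. -/
def sparsity {n : ℕ} (v : Fin n → ℂ) : ℕ := (Finset.univ.filter fun i => v i ≠ 0).card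

/-- Largest s-sparse eigenvalue λ_max(s, M) = sup over s-sparse v ≠ 0 of ‖Mv‖₂/‖v‖₂. -/
def sparseMax {n : ℕ} (s : ℕ) (M : Matrix (Fin n) (Fin n) ℂ) : ℝ :=
  ⨆ v : {v : Fin n → ℂ // v ≠ 0 ∧ sparsity v ≤ s}, l2norm (M.mulVec v.1) / l2norm v.1

/-- Smallest s-sparse eigenvalue λ_min(s, M). -/
def sparseMin {n : ℕ} (s : ℕ) (M : Matrix (Fin n) (Fin n) ℂ) : ℝ :=
  ⨅ v : {v : Fin n → ℂ // v ≠ 0 ∧ sparsity v ≤ s}, l2norm (M.mulVec v.1) / l2norm v.1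

/-- s-sparse condition number cond(s, M) = λ_max(s,M)/λ_min(s,M). -/
def sparseCond {n : ℕ} (s : ℕ) (M : Matrix (Fin n) (Fin n) ℂ) : ℝ :=
  sparseMax s M / sparseMin s M

/-- Operator norm (largest singular value) of a square matrix. -/
def opNorm {n : ℕ} (M : Matrix (Fin n) (Fin n) ℂ) : ℝ :=
  ⨆ v : {v : Fin n → ℂ // v ≠ 0}, l2norm (M.mulVec v.1) / l2norm v.1

/-- The rank-one matrix a a*. -/
def outer {n : ℕ} (a : Fin n → ℂ) : Matrix (Fin n) (Fin n) ℂ :=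
  Matrix.of fun i j => a i * conj (a j)

/-- The covariance matrix E[a a*] of the distribution F. -/
def covMatrix {n : ℕ} (F : Measure (Fin n → ℂ)) : Matrix (Fin n) (Fin n) ℂ :=
  Matrix.of fun i j => ∫ a, a i * conj (a j) ∂F

/-- The sampling matrix A = (1/√m) Σᵢ eᵢ aᵢ*. -/
def samplingMatrix {m n : ℕ} (a : Fin m → Fin n → ℂ) : Matrix (Fin m) (Fin n) ℂ :=
  Matrix.of fun k j => ((Real.sqrt m : ℂ))⁻¹ * conj (a k j)

/-- Orthogonal projector onto vectors supported on T. -/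
def projT {n : ℕ} (T : Finset (Fin n)) : Matrix (Fin n) (Fin n) ℂ :=
  Matrix.of fun i j => if i = j ∧ i ∈ T then 1 else 0

/-- The sign vector sgn(x): xᵢ/|xᵢ| on supp(x) and 0 elsewhere. -/
def sgnVec {n : ℕ} (x : Fin n → ℂ) : Fin n → ℂ :=
  fun i => if x i = 0 then 0 else x i / (‖x i‖ : ℂ)

/-- t is an almost sure bound for both incoherence quantities
    max_i |⟨a,eᵢ⟩|² and max_i |⟨a, E[aa*]⁻¹ eᵢ⟩|². -/
def IncohBound {n : ℕ} (F : Measure (Fin n → ℂ)) (t : ℝ) : Prop :=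
  ∀ᵐ a ∂F, ∀ i, ‖a i‖ ^ 2 ≤ t ∧ ‖∑ j, conj (a j) * (covMatrix F)⁻¹ j i‖ ^ 2 ≤ t

/-- μ is the incoherence parameter: the smallest almost sure incoherence bound. -/
def IsIncoherenceParam {n : ℕ} (F : Measure (Fin n → ℂ)) (μ : ℝ) : Prop :=
  IsLeast {t | IncohBound F t} μ

/-- x is the unique minimizer of the ℓ₁ norm among solutions of A x̄ = A x. -/
def UniqueL1Min {m n : ℕ} (A : Matrix (Fin m) (Fin n) ℂ) (x : Fin n → ℂ) : Prop :=
  ∀ y : Fin n → ℂ, A.mulVec y = A.mulVec x → y ≠ x → l1norm x < l1norm y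

/-! On the kernel of `A` the matrix `M = P_T X A*A` annihilates `h`, and `B` inverts `M` on the
range of `P_T`, so `h_T = B M h_T = -B M h_{T^c}`. Hence `‖h_T‖₂ ≤ ‖B‖ ‖M h_{T^c}‖₂`, and expanding
`M h_{T^c}` along the columns `M eᵢ` (`i ∉ T`), each of norm at most `1`, bounds the latter
by `‖h_{T^c}‖₁`. -/

lemma l2norm_eq_norm_toLp {n : ℕ} (v : Fin n → ℂ) :
    l2norm v = ‖WithLp.toLp 2 v‖ := by
  simp [l2norm, EuclideanSpace.norm_eq]

lemma l2norm_neg {n : ℕ} (v : Fin n → ℂ) : l2norm (-v) = l2norm v := by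
  simp [l2norm]

lemma l2norm_mulVec_le_sum {m n : ℕ} (M : Matrix (Fin m) (Fin n) ℂ) (v : Fin n → ℂ) :
    l2norm (M *ᵥ v) ≤ ∑ i, ‖v i‖ * l2norm (M *ᵥ Pi.single i 1) := by
  have hv : M *ᵥ v = ∑ i, v i • M *ᵥ Pi.single i 1 := by
    conv_lhs => rw [← Finset.univ_sum_single v]
    simp [Matrix.mulVec_sum, Matrix.mulVec_single]
  simp only [l2norm_eq_norm_toLp, hv, WithLp.toLp_sum, WithLp.toLp_smul]
  exact (norm_sum_le _ _).trans_eq (by simp [norm_smul])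

lemma l2norm_mulVec_le_opNorm {n : ℕ} (M : Matrix (Fin n) (Fin n) ℂ) (v : Fin n → ℂ) :
    l2norm (M *ᵥ v) ≤ opNorm M * l2norm v := by
  have hratio (u : Fin n → ℂ) :
      l2norm (M *ᵥ u) ≤ ‖Matrix.toEuclideanCLM (𝕜 := ℂ) M‖ * l2norm u := by
    simpa only [l2norm_eq_norm_toLp, Matrix.toEuclideanCLM_toLp]
      using (Matrix.toEuclideanCLM (𝕜 := ℂ) M).le_opNorm (WithLp.toLp 2 u)
  rcases eq_or_ne v 0 with rfl | hv
  · simp [l2norm]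
  have hpos : 0 < l2norm v := by
    rw [l2norm_eq_norm_toLp, norm_pos_iff]; simpa using hv
  have hbdd : BddAbove (Set.range fun u : {u : Fin n → ℂ // u ≠ 0} =>
      l2norm (M *ᵥ u.1) / l2norm u.1) := by
    refine ⟨_, Set.forall_mem_range.2 fun u => div_le_of_le_mul₀ ?_ ?_ (hratio u.1)⟩
    · exact Real.sqrt_nonneg _
    · positivity
  exact (div_le_iff₀ hpos).1 (le_ciSup hbdd ⟨v, hv⟩)

lemma projT_mulVec_apply {n : ℕ} (S : Finset (Fin n)) (v : Fin n → ℂ) (i : Fin n) :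
    (projT S *ᵥ v) i = if i ∈ S then v i else 0 := by
  by_cases hi : i ∈ S <;> simp [projT, Matrix.mulVec, dotProduct, hi]

lemma projT_add_projT_compl {n : ℕ} (S : Finset (Fin n)) :
    projT S + projT Sᶜ = 1 := by
  ext i j
  by_cases hij : i = j
  · subst hij; by_cases hi : i ∈ S <;> simp [projT, hi]
  · simp [projT, hij]

lemma l2norm_mulVec_le_l1norm {m n : ℕ} (M : Matrix (Fin m) (Fin n) ℂ) (v : Fin n → ℂ)
    (hcol : ∀ i, v i ≠ 0 → l2norm (M *ᵥ Pi.single i 1) ≤ 1) :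
    l2norm (M *ᵥ v) ≤ l1norm v := by
  refine (l2norm_mulVec_le_sum M v).trans (Finset.sum_le_sum fun i _ => ?_)
  rcases eq_or_ne (v i) 0 with hi | hi
  · simp [hi]
  · exact mul_le_of_le_one_right (norm_nonneg _) (hcol i hi)

lemma mulVec_eq_neg_of_mul_mul_eq {ι R : Type*} [Fintype ι] [DecidableEq ι] [CommRing R]
    {B M P Q : Matrix ι ι R} (hB : B * (M * P) = P) (hPQ : P + Q = 1)
    {h : ι → R} (hMh : M *ᵥ h = 0) :
    P *ᵥ h = -(B *ᵥ (M *ᵥ (Q *ᵥ h))) := by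
  have hP : P = 1 - Q := eq_sub_of_add_eq hPQ
  calc P *ᵥ h = B *ᵥ (M *ᵥ (P *ᵥ h)) := by
        conv_lhs => rw [← hB]
        simp only [Matrix.mulVec_mulVec]
    _ = -(B *ᵥ (M *ᵥ (Q *ᵥ h))) := by
      rw [hP, Matrix.sub_mulVec, Matrix.one_mulVec, Matrix.mulVec_sub, hMh, zero_sub,
        Matrix.mulVec_neg]

theorem statement13_general {n m : ℕ}
    (T : Finset (Fin n))
    (A : Matrix (Fin m) (Fin n) ℂ)
    (X : Matrix (Fin n) (Fin n) ℂ)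
    (B : Matrix (Fin n) (Fin n) ℂ)
    (hB1 : B * (projT T * X * Aᴴ * A * projT T) = projT T)
    (hBnorm : opNorm B ≤ 2)
    (hoff : ∀ i ∉ T, l2norm ((projT T * (X * Aᴴ * A)).mulVec (Pi.single i 1)) ≤ 1) :
    ∀ h : Fin n → ℂ, A.mulVec h = 0 →
      l2norm ((projT T).mulVec h) ≤ 2 * l1norm ((projT Tᶜ).mulVec h) := by
  intro h hAh
  set M := projT T * (X * Aᴴ * A)
  have hBM : B * (M * projT T) = projT T := by simpa only [M, Matrix.mul_assoc] using hB1
  have hMh : M *ᵥ h = 0 := by simp [M, ← Matrix.mulVec_mulVec, hAh]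
  have hcol (i : Fin n) (hi : (projT Tᶜ *ᵥ h) i ≠ 0) : l2norm (M *ᵥ Pi.single i 1) ≤ 1 :=
    hoff i fun hiT => hi (by simp [projT_mulVec_apply, hiT])
  rw [mulVec_eq_neg_of_mul_mul_eq hBM (projT_add_projT_compl T) hMh, l2norm_neg]
  calc l2norm (B *ᵥ (M *ᵥ (projT Tᶜ *ᵥ h)))
      ≤ opNorm B * l2norm (M *ᵥ (projT Tᶜ *ᵥ h)) := l2norm_mulVec_le_opNorm _ _
    _ ≤ 2 * l1norm (projT Tᶜ *ᵥ h) :=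
      mul_le_mul hBnorm (l2norm_mulVec_le_l1norm M _ hcol) (Real.sqrt_nonneg _) zero_le_two

/-- Kernel estimate from the proof of inexact duality: under conditions (i) and (ii),
every h in the kernel of A satisfies ‖h_T‖₂ ≤ 2‖h_{T^c}‖₁. -/
theorem statement13 {n m s : ℕ} (x : Fin n → ℂ) (hx : sparsity x ≤ s)
    (T : Finset (Fin n)) (hT : T = Finset.univ.filter fun i => x i ≠ 0)
    (A : Matrix (Fin m) (Fin n) ℂ)
    (X : Matrix (Fin n) (Fin n) ℂ)
    (B : Matrix (Fin n) (Fin n) ℂ)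
    (hB1 : B * (projT T * X * Aᴴ * A * projT T) = projT T)
    (hB2 : (projT T * X * Aᴴ * A * projT T) * B = projT T)
    (hB3 : projT T * B * projT T = B)
    (hBnorm : opNorm B ≤ 2)
    (hoff : ∀ i ∉ T, l2norm ((projT T * (X * Aᴴ * A)).mulVec (Pi.single i 1)) ≤ 1) :
    ∀ h : Fin n → ℂ, A.mulVec h = 0 →
      l2norm ((projT T).mulVec h) ≤ 2 * l1norm ((projT Tᶜ).mulVec h) :=
  statement13_general T A X B hB1 hBnorm hoff
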